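/- arXiv:2311.11156 — 2 statements merged into one kernel-verified Lean document; each statement's English description precedes it below -/
import Mathlib

section
/- Two-level high-order barrier invariance: let ψ⁰, ψ¹, ψ² : [0,T) → ℝ with ψ⁰, ψ¹ differentiable, ψ¹ = (ψ⁰)' + α₁ψ⁰, ψ² = (ψ¹)' + α₂ψ¹ for constants α₁, α₂ > 0. If ψ²(t) ≥ 0 for all t and ψ⁰(0) ≥ 0, ψ¹(0) ≥ 0, then ψ⁰(t) ≥ 0 and ψ¹(t) ≥ 0 for all t ∈ [0,T). -/
/-! Multiplying by the integrating factor `exp (α t)` turns `ψ' + α ψ ≥ 0` into monotonicity of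
`exp (α t) ψ t`, so nonnegativity at the initial time propagates forward. Applied first to `ψ¹`
(using `ψ² ≥ 0`) and then to `ψ⁰` (using the resulting `ψ¹ ≥ 0`), this gives both claims. -/

open Set Real

section IntegratingFactor

variable {D : Set ℝ} {α : ℝ} {ψ ψ' : ℝ → ℝ}

theorem monotoneOn_exp_mul_of_deriv_add_mul_nonneg (hD : Convex ℝ D)
    (hd : ∀ t ∈ D, HasDerivWithinAt ψ (ψ' t) D t) (hb : ∀ t ∈ D, 0 ≤ ψ' t + α * ψ t) :
    MonotoneOn (fun t => exp (α * t) * ψ t) D := by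
  have hexp (t : ℝ) : HasDerivAt (fun s => exp (α * s)) (exp (α * t) * α) t := by
    simpa using ((hasDerivAt_id t).const_mul α).exp
  refine monotoneOn_of_hasDerivWithinAt_nonneg hD
    (f' := fun t => exp (α * t) * α * ψ t + exp (α * t) * ψ' t) ?_ ?_ ?_
  · exact (continuous_exp.comp (continuous_const_mul α)).continuousOn.mul
      fun t ht => (hd t ht).continuousWithinAt
  · intro t ht
    exact (hexp t).hasDerivWithinAt.mul ((hd t (interior_subset ht)).mono interior_subset)
  · intro t ht
    have := mul_nonneg (exp_pos (α * t)).le (hb t (interior_subset ht))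
    linarith

theorem nonneg_of_deriv_add_mul_nonneg (hD : Convex ℝ D) {a : ℝ} (ha : a ∈ D) (h0 : 0 ≤ ψ a)
    (hd : ∀ t ∈ D, HasDerivWithinAt ψ (ψ' t) D t) (hb : ∀ t ∈ D, 0 ≤ ψ' t + α * ψ t) :
    ∀ t ∈ D, a ≤ t → 0 ≤ ψ t := by
  intro t ht hat
  have hmono := monotoneOn_exp_mul_of_deriv_add_mul_nonneg hD hd hb ha ht hat
  have : 0 ≤ exp (α * t) * ψ t := le_trans (by positivity) hmono
  exact nonneg_of_mul_nonneg_right this (exp_pos _)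

end IntegratingFactor

theorem two_level_HOBF_invariance_general (T : EReal)
    (α₁ α₂ : ℝ)
    (ψ0 ψ0' ψ1 ψ1' ψ2 : ℝ → ℝ)
    (hd0 : ∀ t : ℝ, 0 ≤ t → (t : EReal) < T →
      HasDerivWithinAt ψ0 (ψ0' t) {s : ℝ | 0 ≤ s ∧ (s : EReal) < T} t)
    (hd1 : ∀ t : ℝ, 0 ≤ t → (t : EReal) < T →
      HasDerivWithinAt ψ1 (ψ1' t) {s : ℝ | 0 ≤ s ∧ (s : EReal) < T} t)
    (hrel1 : ∀ t : ℝ, 0 ≤ t → (t : EReal) < T → ψ1 t = ψ0' t + α₁ * ψ0 t)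
    (hrel2 : ∀ t : ℝ, 0 ≤ t → (t : EReal) < T → ψ2 t = ψ1' t + α₂ * ψ1 t)
    (h2 : ∀ t : ℝ, 0 ≤ t → (t : EReal) < T → 0 ≤ ψ2 t)
    (h00 : 0 ≤ ψ0 0) (h10 : 0 ≤ ψ1 0) :
    ∀ t : ℝ, 0 ≤ t → (t : EReal) < T → 0 ≤ ψ0 t ∧ 0 ≤ ψ1 t := by
  set S : Set ℝ := {s : ℝ | 0 ≤ s ∧ (s : EReal) < T}
  have hS : Convex ℝ S := OrdConnected.convex
    ⟨fun _ hx _ hy _ hz => ⟨hx.1.trans hz.1, (EReal.coe_le_coe_iff.2 hz.2).trans_lt hy.2⟩⟩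
  intro t ht htT
  have h0S : (0 : ℝ) ∈ S := ⟨le_rfl, (EReal.coe_le_coe_iff.2 ht).trans_lt htT⟩
  have hψ1 : ∀ s ∈ S, 0 ≤ ψ1 s := fun s hs =>
    nonneg_of_deriv_add_mul_nonneg hS h0S h10 (fun s hs => hd1 s hs.1 hs.2)
      (fun s hs => hrel2 s hs.1 hs.2 ▸ h2 s hs.1 hs.2) s hs hs.1
  have hψ0 : ∀ s ∈ S, 0 ≤ ψ0 s := fun s hs =>
    nonneg_of_deriv_add_mul_nonneg hS h0S h00 (fun s hs => hd0 s hs.1 hs.2)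
      (fun s hs => hrel1 s hs.1 hs.2 ▸ hψ1 s hs) s hs hs.1
  exact ⟨hψ0 t ⟨ht, htT⟩, hψ1 t ⟨ht, htT⟩⟩

/-- Two-level high-order barrier invariance: with `ψ¹ = (ψ⁰)' + α₁ψ⁰`,
`ψ² = (ψ¹)' + α₂ψ¹` on `[0,T)` (`T ∈ (0,∞]`, modeled as `T : EReal`), `α₁, α₂ > 0`,
`ψ² ≥ 0` on `[0,T)`, and `ψ⁰(0) ≥ 0`, `ψ¹(0) ≥ 0`, we get `ψ⁰ ≥ 0` and `ψ¹ ≥ 0`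
on `[0,T)`. -/
theorem two_level_HOBF_invariance (T : EReal) (hT : 0 < T)
    (α₁ α₂ : ℝ) (hα₁ : 0 < α₁) (hα₂ : 0 < α₂)
    (ψ0 ψ0' ψ1 ψ1' ψ2 : ℝ → ℝ)
    (hd0 : ∀ t : ℝ, 0 ≤ t → (t : EReal) < T →
      HasDerivWithinAt ψ0 (ψ0' t) {s : ℝ | 0 ≤ s ∧ (s : EReal) < T} t)
    (hd1 : ∀ t : ℝ, 0 ≤ t → (t : EReal) < T →
      HasDerivWithinAt ψ1 (ψ1' t) {s : ℝ | 0 ≤ s ∧ (s : EReal) < T} t)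
    (hrel1 : ∀ t : ℝ, 0 ≤ t → (t : EReal) < T → ψ1 t = ψ0' t + α₁ * ψ0 t)
    (hrel2 : ∀ t : ℝ, 0 ≤ t → (t : EReal) < T → ψ2 t = ψ1' t + α₂ * ψ1 t)
    (h2 : ∀ t : ℝ, 0 ≤ t → (t : EReal) < T → 0 ≤ ψ2 t)
    (h00 : 0 ≤ ψ0 0) (h10 : 0 ≤ ψ1 0) :
    ∀ t : ℝ, 0 ≤ t → (t : EReal) < T → 0 ≤ ψ0 t ∧ 0 ≤ ψ1 t :=
  two_level_HOBF_invariance_general T α₁ α₂ ψ0 ψ0' ψ1 ψ1' ψ2 hd0 hd1 hrel1 hrel2 h2 h00 h10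
end

section
/- If φ² = φ̈⁰ + (α¹+α²)φ̇⁰ + α¹α²φ⁰ with α¹, α² > 0 and φ⁰ satisfies the linear ODE inequality φ²(t) ≥ 0 for all t, and additionally φ⁰(0) ≥ 0 and φ̇⁰(0) + α¹φ⁰(0) ≥ 0, then φ⁰(t) ≥ 0 for all t ≥ 0 in the domain. -/
/-! Write `ψ = φ̇⁰ + α¹φ⁰`, so that `φ² = ψ̇ + α²ψ`. For any `α` and `f`, the derivative of
`exp (α t) f t` is `exp (α t) (ḟ + α f)`, so `ḟ + α f ≥ 0` makes it monotone and `f` keeps the sign of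
`f 0`. Applied first to `ψ` with `α²` and then to `φ⁰` with `α¹`, this gives `ψ ≥ 0` and then `φ⁰ ≥ 0`. -/

open Real Set

lemma monotoneOn_exp_mul_of_deriv_add_mul_nonneg_s11 {S : Set ℝ} (hS : Convex ℝ S) (α : ℝ)
    {f f' : ℝ → ℝ} (hf : ∀ t ∈ S, HasDerivWithinAt f (f' t) S t)
    (hineq : ∀ t ∈ S, 0 ≤ f' t + α * f t) :
    MonotoneOn (fun t => exp (α * t) * f t) S := by
  have hderiv : ∀ t ∈ S,
      HasDerivWithinAt (fun t => exp (α * t) * f t) (exp (α * t) * (f' t + α * f t)) S t := by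
    intro t ht
    have hexp : HasDerivWithinAt (fun t => exp (α * t)) (exp (α * t) * α) S t :=
      ((hasDerivAt_id t).const_mul α).exp.hasDerivWithinAt.congr_deriv (by simp)
    exact (hexp.mul (hf t ht)).congr_deriv (by ring)
  refine monotoneOn_of_hasDerivWithinAt_nonneg hS (fun t ht => (hderiv t ht).continuousWithinAt)
    (fun t ht => (hderiv t (interior_subset ht)).mono interior_subset) fun t ht => ?_
  exact mul_nonneg (exp_nonneg _) (hineq t (interior_subset ht))

lemma nonneg_of_deriv_add_mul_nonneg_s11 {S : Set ℝ} (hS : Convex ℝ S) (α : ℝ)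
    {f f' : ℝ → ℝ} (hf : ∀ t ∈ S, HasDerivWithinAt f (f' t) S t)
    (hineq : ∀ t ∈ S, 0 ≤ f' t + α * f t) {a t : ℝ} (ha : a ∈ S) (ht : t ∈ S) (hat : a ≤ t)
    (hfa : 0 ≤ f a) : 0 ≤ f t := by
  have hmono := monotoneOn_exp_mul_of_deriv_add_mul_nonneg_s11 hS α hf hineq ha ht hat
  exact nonneg_of_mul_nonneg_right ((mul_nonneg (exp_nonneg _) hfa).trans hmono) (exp_pos _)

lemma convex_setOf_nonneg_and_coe_lt (T : EReal) :
    Convex ℝ {s : ℝ | 0 ≤ s ∧ (s : EReal) < T} :=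
  (convex_Ici 0).inter (ordConnected_Iio.preimage_mono EReal.coe_strictMono.monotone).convex

theorem second_order_CBF_safety_general (T : EReal) (hT : 0 < T)
    (α₁ α₂ : ℝ)
    (φ0 dφ0 ddφ0 : ℝ → ℝ)
    (hd0 : ∀ t : ℝ, 0 ≤ t → (t : EReal) < T →
      HasDerivWithinAt φ0 (dφ0 t) {s : ℝ | 0 ≤ s ∧ (s : EReal) < T} t)
    (hdd0 : ∀ t : ℝ, 0 ≤ t → (t : EReal) < T →
      HasDerivWithinAt dφ0 (ddφ0 t) {s : ℝ | 0 ≤ s ∧ (s : EReal) < T} t)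
    (h2 : ∀ t : ℝ, 0 ≤ t → (t : EReal) < T →
      0 ≤ ddφ0 t + (α₁ + α₂) * dφ0 t + α₁ * α₂ * φ0 t)
    (h0 : 0 ≤ φ0 0) (h1 : 0 ≤ dφ0 0 + α₁ * φ0 0) :
    ∀ t : ℝ, 0 ≤ t → (t : EReal) < T → 0 ≤ φ0 t := by
  set S : Set ℝ := {s : ℝ | 0 ≤ s ∧ (s : EReal) < T}
  have hS : Convex ℝ S := convex_setOf_nonneg_and_coe_lt T
  have h0S : (0 : ℝ) ∈ S := ⟨le_rfl, hT⟩
  have hψ : ∀ t ∈ S, HasDerivWithinAt (fun t => dφ0 t + α₁ * φ0 t) (ddφ0 t + α₁ * dφ0 t) S t :=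
    fun t ht => (hdd0 t ht.1 ht.2).add ((hd0 t ht.1 ht.2).const_mul α₁)
  have hψ_nonneg : ∀ t ∈ S, 0 ≤ dφ0 t + α₁ * φ0 t := fun t ht =>
    nonneg_of_deriv_add_mul_nonneg_s11 hS α₂ hψ
      (fun s hs => by linarith [h2 s hs.1 hs.2]) h0S ht ht.1 h1
  intro t ht0 htT
  exact nonneg_of_deriv_add_mul_nonneg_s11 hS α₁ (fun s hs => hd0 s hs.1 hs.2) hψ_nonneg h0S
    ⟨ht0, htT⟩ ht0 h0

/-- Safety guarantee of the second-order CBF: if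
`φ² = (φ⁰)'' + (α¹+α²)(φ⁰)' + α¹α²φ⁰ ≥ 0` on `[0,T)` (`T ∈ (0,∞]`, as `T : EReal`),
with `α¹, α² > 0`, `φ⁰(0) ≥ 0` and `(φ⁰)'(0) + α¹φ⁰(0) ≥ 0`, then `φ⁰ ≥ 0` on `[0,T)`. -/
theorem second_order_CBF_safety (T : EReal) (hT : 0 < T)
    (α₁ α₂ : ℝ) (hα₁ : 0 < α₁) (hα₂ : 0 < α₂)
    (φ0 dφ0 ddφ0 : ℝ → ℝ)
    (hd0 : ∀ t : ℝ, 0 ≤ t → (t : EReal) < T →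
      HasDerivWithinAt φ0 (dφ0 t) {s : ℝ | 0 ≤ s ∧ (s : EReal) < T} t)
    (hdd0 : ∀ t : ℝ, 0 ≤ t → (t : EReal) < T →
      HasDerivWithinAt dφ0 (ddφ0 t) {s : ℝ | 0 ≤ s ∧ (s : EReal) < T} t)
    (h2 : ∀ t : ℝ, 0 ≤ t → (t : EReal) < T →
      0 ≤ ddφ0 t + (α₁ + α₂) * dφ0 t + α₁ * α₂ * φ0 t)
    (h0 : 0 ≤ φ0 0) (h1 : 0 ≤ dφ0 0 + α₁ * φ0 0) :
    ∀ t : ℝ, 0 ≤ t → (t : EReal) < T → 0 ≤ φ0 t :=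
  second_order_CBF_safety_general T hT α₁ α₂ φ0 dφ0 ddφ0 hd0 hdd0 h2 h0 h1
end
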